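/- Define F(x,y) := 2·⟨x,y⟩/( ‖x‖²·‖y‖² ) for nonzero vectors x, y ∈ ℝ². For all x, y ∈ ℝ² with x ≠ 0, y ≠ 0 and x + y ≠ 0, the telescoping identity F(x,y) − F(x+y, y) − F(x, x+y) = −4·det(x,y)² / ( ‖x‖²·‖y‖²·‖x+y‖² ) holds, where det((a,b),(c,d)) = a·d − b·c. -/

import Mathlib

/-!
Write `X = ‖x‖²`, `Y = ‖y‖²`, `P = ⟨x,y⟩`. After clearing the three denominators the left side
becomes `2P(X + 2P + Y) - 2(P + Y)X - 2(X + P)Y = 4(P² - XY)`, and Lagrange's identity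
`XY = P² + det(x,y)²` turns this into `-4 det(x,y)²`.
-/

/-- `F(x,y) = 2⟨x,y⟩/(‖x‖²‖y‖²)` for vectors in `ℝ²`. -/
noncomputable def F (x y : ℝ × ℝ) : ℝ :=
  2 * (x.1 * y.1 + x.2 * y.2) / ((x.1 ^ 2 + x.2 ^ 2) * (y.1 ^ 2 + y.2 ^ 2))

theorem Prod.fst_sq_add_snd_sq_ne_zero {R : Type*} [CommRing R] [LinearOrder R]
    [IsStrictOrderedRing R] {p : R × R} (hp : p ≠ 0) : p.1 ^ 2 + p.2 ^ 2 ≠ 0 := by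
  rw [sq, sq, Ne, mul_self_add_mul_self_eq_zero]
  exact fun h ↦ hp (Prod.ext h.1 h.2)

theorem stmt_9 (x y : ℝ × ℝ) (hx : x ≠ 0) (hy : y ≠ 0) (hxy : x + y ≠ 0) :
    F x y - F (x + y) y - F x (x + y) =
      -4 * (x.1 * y.2 - x.2 * y.1) ^ 2 /
        ((x.1 ^ 2 + x.2 ^ 2) * (y.1 ^ 2 + y.2 ^ 2) *
          ((x + y).1 ^ 2 + (x + y).2 ^ 2)) := by
  have hX := Prod.fst_sq_add_snd_sq_ne_zero hx
  have hY := Prod.fst_sq_add_snd_sq_ne_zero hy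
  have hXY := Prod.fst_sq_add_snd_sq_ne_zero hxy
  simp only [F, Prod.fst_add, Prod.snd_add] at hXY ⊢
  field_simp
  ring
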